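/- arXiv:2009.01033 — 7 statements merged into one kernel-verified Lean document; each statement's English description precedes it below -/
import Mathlib

section
/- If there exists a real number λ such that the matrix M(λ) = [[1, a3/2, (a2-λ)/2], [a3/2, λ, a1/2], [(a2-λ)/2, a1/2, a0]] is positive definite, then the binary quartic form f(x,y) = x^4 + a3*x^3*y + a2*x^2*y^2 + a1*x*y^3 + a0*y^4 satisfies f(x,y) > 0 for all real x, y not both zero. -/
/-!
Evaluating the quadratic form of `M(λ)` at `(x², xy, y²)` gives back the quartic: the two
off-diagonal entries `(a₂ - λ)/2` contribute `(a₂ - λ) x²y²` and the middle diagonal entry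
contributes `λ x²y²`, so `λ` cancels. Positive definiteness then gives positivity, since
`(x², xy, y²) ≠ 0` whenever `(x, y) ≠ 0`.
-/

lemma veronese_ne_zero {x y : ℝ} (hxy : (x, y) ≠ (0, 0)) :
    (![x ^ 2, x * y, y ^ 2] : Fin 3 → ℝ) ≠ 0 := by
  intro hv
  have hx : x ^ 2 = 0 := congrFun hv 0
  have hy : y ^ 2 = 0 := congrFun hv 2
  exact hxy (by simp_all)

lemma veronese_dotProduct_mulVec (a0 a1 a2 a3 L x y : ℝ) :
    ![x ^ 2, x * y, y ^ 2] ⬝ᵥ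
        (!![1, a3/2, (a2-L)/2; a3/2, L, a1/2; (a2-L)/2, a1/2, a0] : Matrix (Fin 3) (Fin 3) ℝ).mulVec
          ![x ^ 2, x * y, y ^ 2] =
      x^4 + a3*x^3*y + a2*x^2*y^2 + a1*x*y^3 + a0*y^4 := by
  simp only [Matrix.mulVec, dotProduct, Fin.sum_univ_three, Matrix.of_apply,
    Matrix.cons_val_zero, Matrix.cons_val_one, Matrix.cons_val_two, Matrix.head_cons, Matrix.tail_cons]
  ring

theorem stmt4 (a0 a1 a2 a3 : ℝ)
    (h : ∃ L : ℝ, ((!![1, a3/2, (a2-L)/2; a3/2, L, a1/2; (a2-L)/2, a1/2, a0] : Matrix (Fin 3) (Fin 3) ℝ)).PosDef) :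
    ∀ x y : ℝ, (x, y) ≠ (0, 0) →
      0 < x^4 + a3*x^3*y + a2*x^2*y^2 + a1*x*y^3 + a0*y^4 := by
  obtain ⟨L, hL⟩ := h
  intro x y hxy
  rw [← veronese_dotProduct_mulVec a0 a1 a2 a3 L]
  exact hL.dotProduct_mulVec_pos (veronese_ne_zero hxy)
end

section
/- Let b0 = (-a1^2 + a1*a2*a3 - a0*a3^2)/4, b1 = (4*a0 - a2^2 - a1*a3)/4, b2 = a2/2. If 3*b1 + 4*b2^2 ≥ 0, λ0 = (4*b2 + 2*sqrt(3*b1 + 4*b2^2))/3 = a3^2/4 and det(M(λ0)) ≥ 0, then a1 = (4*a2*a3 - a3^3)/8 and a0 = (4*a2 - a3^2)^2/64, and hence M(λ0) is a positive semi-definite matrix of rank 1. -/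
/-!
Since `λ₀ = a₃²/4`, the leading `2 × 2` minor of `M(λ₀)` vanishes, and expanding along the
corner entry `1` shows `det M(λ₀) = -(a₁/2 - a₃(a₂ - λ₀)/4)² ≤ 0`; so `det M(λ₀) ≥ 0` forces the
formula for `a₁`. Squaring `√(3b₁ + 4b₂²) = (3λ₀ - 4b₂)/2` is then linear in `a₀` and gives its
formula. With both, `M(λ₀) = v vᵀ` for `v = (1, a₃/2, (a₂ - λ₀)/2) ≠ 0`.
-/

open Matrix

namespace Matrix

theorem eq_zero_of_rank_eq_zero {m n K : Type*} [Fintype n] [DecidableEq n] [Field K]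
    {A : Matrix m n K} (h : A.rank = 0) : A = 0 := by
  rw [rank, Submodule.finrank_eq_zero, LinearMap.range_eq_bot, ← toLin'_apply'] at h
  exact toLin'.map_eq_zero_iff.mp h

theorem rank_vecMulVec_eq_one {m n K : Type*} [Fintype n] [DecidableEq n] [Field K]
    {a : m → K} {b : n → K} (ha : a ≠ 0) (hb : b ≠ 0) : (vecMulVec a b).rank = 1 := by
  have hne : (vecMulVec a b).rank ≠ 0 := by
    intro h
    obtain ⟨i, hi⟩ := Function.ne_iff.mp ha
    obtain ⟨j, hj⟩ := Function.ne_iff.mp hb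
    exact mul_ne_zero hi hj congr($(eq_zero_of_rank_eq_zero h) i j)
  have hle := rank_vecMulVec_le a b
  omega

variable {R : Type*} [CommRing R]

theorem det_fin_three_of_corner_one (p q r s t : R) :
    (!![1, p, q; p, r, s; q, s, t] : Matrix (Fin 3) (Fin 3) R).det =
      (r - p ^ 2) * (t - q ^ 2) - (s - p * q) ^ 2 := by
  rw [det_fin_three]
  simp only [of_apply, cons_val', cons_val_zero, cons_val_one, cons_val_two, empty_val',
    cons_val_fin_one, head_cons, head_fin_const, tail_cons]
  ring

theorem of_corner_one_eq_vecMulVec {p q r s t : R} (hr : r = p ^ 2) (hs : s = p * q)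
    (ht : t = q ^ 2) :
    (!![1, p, q; p, r, s; q, s, t] : Matrix (Fin 3) (Fin 3) R) = vecMulVec ![1, p, q] ![1, p, q] := by
  subst hr hs ht
  ext i j
  fin_cases i <;> fin_cases j <;> simp [vecMulVec_apply] <;> ring

end Matrix

theorem stmt6_general (a0 a1 a2 a3 b1 b2 L : ℝ)
    (hb1 : b1 = (4*a0 - a2^2 - a1*a3)/4)
    (hb2 : b2 = a2/2)
    (hnn : 3*b1 + 4*b2^2 ≥ 0)
    (hL : L = (4*b2 + 2*Real.sqrt (3*b1 + 4*b2^2))/3)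
    (hEq : L = a3^2/4)
    (hdet : ((!![1, a3/2, (a2-L)/2; a3/2, L, a1/2; (a2-L)/2, a1/2, a0] : Matrix (Fin 3) (Fin 3) ℝ)).det ≥ 0) :
    a1 = (4*a2*a3 - a3^3)/8 ∧ a0 = (4*a2 - a3^2)^2/64 ∧
    ((!![1, a3/2, (a2-L)/2; a3/2, L, a1/2; (a2-L)/2, a1/2, a0] : Matrix (Fin 3) (Fin 3) ℝ)).PosSemidef ∧ ((!![1, a3/2, (a2-L)/2; a3/2, L, a1/2; (a2-L)/2, a1/2, a0] : Matrix (Fin 3) (Fin 3) ℝ)).rank = 1 := by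
  have hr : L = (a3 / 2) ^ 2 := by rw [hEq]; ring
  have hs : a1 / 2 = a3 / 2 * ((a2 - L) / 2) := by
    rw [det_fin_three_of_corner_one, sub_eq_zero.mpr hr, zero_mul, zero_sub] at hdet
    nlinarith [sq_nonneg (a1 / 2 - a3 / 2 * ((a2 - L) / 2))]
  have ha1 : a1 = (4*a2*a3 - a3^3)/8 := by linear_combination 2 * hs - a3 / 2 * hEq
  have hsqrt : Real.sqrt (3*b1 + 4*b2^2) = (3 * L - 4 * b2) / 2 := by linarith
  have hsq := Real.sq_sqrt hnn
  rw [hsqrt] at hsq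
  have ha0 : a0 = (4*a2 - a3^2)^2/64 := by
    subst hb1 hb2 hEq
    linear_combination (-1/3) * hsq + (a3/4) * ha1
  have ht : a0 = ((a2 - L) / 2) ^ 2 := by rw [ha0, hEq]; ring
  rw [of_corner_one_eq_vecMulVec hr hs ht]
  refine ⟨ha1, ha0, ?_, rank_vecMulVec_eq_one ?_ ?_⟩
  · simpa using posSemidef_vecMulVec_self_star ![(1 : ℝ), a3 / 2, (a2 - L) / 2]
  all_goals exact fun h => one_ne_zero congr($h 0)

theorem stmt6 (a0 a1 a2 a3 b0 b1 b2 L : ℝ)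
    (hb0 : b0 = (-a1^2 + a1*a2*a3 - a0*a3^2)/4)
    (hb1 : b1 = (4*a0 - a2^2 - a1*a3)/4)
    (hb2 : b2 = a2/2)
    (hnn : 3*b1 + 4*b2^2 ≥ 0)
    (hL : L = (4*b2 + 2*Real.sqrt (3*b1 + 4*b2^2))/3)
    (hEq : L = a3^2/4)
    (hdet : ((!![1, a3/2, (a2-L)/2; a3/2, L, a1/2; (a2-L)/2, a1/2, a0] : Matrix (Fin 3) (Fin 3) ℝ)).det ≥ 0) :
    a1 = (4*a2*a3 - a3^3)/8 ∧ a0 = (4*a2 - a3^2)^2/64 ∧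
    ((!![1, a3/2, (a2-L)/2; a3/2, L, a1/2; (a2-L)/2, a1/2, a0] : Matrix (Fin 3) (Fin 3) ℝ)).PosSemidef ∧ ((!![1, a3/2, (a2-L)/2; a3/2, L, a1/2; (a2-L)/2, a1/2, a0] : Matrix (Fin 3) (Fin 3) ℝ)).rank = 1 :=
  stmt6_general a0 a1 a2 a3 b1 b2 L hb1 hb2 hnn hL hEq hdet
end

section
/- If λ0 ≥ a3^2/4 and -(1/4)λ0^3 + b2*λ0^2 + b1*λ0 + b0 ≥ 0, where b0 = (-a1^2 + a1*a2*a3 - a0*a3^2)/4, b1 = (4*a0 - a2^2 - a1*a3)/4, b2 = a2/2, 3*b1 + 4*b2^2 ≥ 0 and λ0 = (4*b2 + 2*sqrt(3*b1 + 4*b2^2))/3, then the quartic form f(x,y) = x^4 + a3*x^3*y + a2*x^2*y^2 + a1*x*y^3 + a0*y^4 satisfies f(x,y) ≥ 0 for all real x, y. -/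
/-!
For every `μ`, completing the square in `x²` gives
`f(x, y) = (x² + (a₃/2) x y + ((a₂ - μ)/2) y²)² + y² Q_μ(x, y)`
with a binary quadratic `Q_μ` whose discriminant is `-4 g(μ)`, where `g` is the resolvent cubic
`-(1/4) μ³ + b₂ μ² + b₁ μ + b₀`. So `f ≥ 0` as soon as `Q_μ` is positive semidefinite, i.e. its
leading coefficient `μ - a₃²/4` and `g(μ)` are nonnegative. The chosen `λ₀` is the larger critical
point of `g`; vanishing of `g'` there also settles the degenerate case `λ₀ = a₃²/4`, in which `Q_μ`
must vanish identically.
-/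

lemma quadratic_form_nonneg_of_discrim_nonpos {A B C : ℝ} (hA : 0 < A) (hD : B^2 ≤ 4*A*C)
    (u v : ℝ) : 0 ≤ A*u^2 + B*u*v + C*v^2 := by
  have hsq : 4*A*(A*u^2 + B*u*v + C*v^2) = (2*A*u + B*v)^2 + (4*A*C - B^2)*v^2 := by ring
  refine nonneg_of_mul_nonneg_right ?_ (by positivity : 0 < 4*A)
  rw [hsq]
  exact add_nonneg (sq_nonneg _) (mul_nonneg (sub_nonneg.mpr hD) (sq_nonneg v))

namespace QuarticForm

variable (a0 a1 a2 a3 : ℝ)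

noncomputable def resolvent (μ : ℝ) : ℝ :=
  -(1/4)*μ^3 + (a2/2)*μ^2 + (4*a0 - a2^2 - a1*a3)/4*μ + (-a1^2 + a1*a2*a3 - a0*a3^2)/4

noncomputable def resolventDeriv (μ : ℝ) : ℝ :=
  -(3/4)*μ^2 + a2*μ + (4*a0 - a2^2 - a1*a3)/4

lemma eq_sq_add_sq_mul_quadratic (μ x y : ℝ) :
    x^4 + a3*x^3*y + a2*x^2*y^2 + a1*x*y^3 + a0*y^4
      = (x^2 + a3/2*x*y + (a2 - μ)/2*y^2)^2
        + y^2*((μ - a3^2/4)*x^2 + (a1 - a3*(a2 - μ)/2)*x*y + (a0 - ((a2 - μ)/2)^2)*y^2) := by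
  ring

lemma discrim_residual_eq_resolvent (μ : ℝ) :
    4*(μ - a3^2/4)*(a0 - ((a2 - μ)/2)^2) - (a1 - a3*(a2 - μ)/2)^2
      = 4*resolvent a0 a1 a2 a3 μ := by
  rw [resolvent]; ring

theorem nonneg_of_resolvent_nonneg_of_resolventDeriv_eq_zero {a0 a1 a2 a3 μ : ℝ}
    (hμ : a3^2/4 ≤ μ) (hg : 0 ≤ resolvent a0 a1 a2 a3 μ)
    (hg' : resolventDeriv a0 a1 a2 a3 μ = 0) (x y : ℝ) :
    0 ≤ x^4 + a3*x^3*y + a2*x^2*y^2 + a1*x*y^3 + a0*y^4 := by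
  rw [eq_sq_add_sq_mul_quadratic a0 a1 a2 a3 μ]
  refine add_nonneg (sq_nonneg _) (mul_nonneg (sq_nonneg _) ?_)
  have hD := discrim_residual_eq_resolvent a0 a1 a2 a3 μ
  rcases hμ.lt_or_eq with hlt | hμeq
  · exact quadratic_form_nonneg_of_discrim_nonpos (sub_pos.mpr hlt) (by linarith) x y
  · -- with a vanishing leading coefficient, `g(μ) ≥ 0` kills the `x y` term and `g'(μ) = 0` the `y²` term
    have hA : μ - a3^2/4 = 0 := by linarith
    rw [hA] at hD ⊢
    have hB : a1 - a3*(a2 - μ)/2 = 0 := by nlinarith [sq_nonneg (a1 - a3*(a2 - μ)/2)]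
    have hC : a0 - ((a2 - μ)/2)^2 = 0 := by
      rw [resolventDeriv] at hg'
      linear_combination hg' + (a3/4)*hB - ((a2 - μ)/2)*hA
    simp [hB, hC]

end QuarticForm

theorem stmt7 (a0 a1 a2 a3 b0 b1 b2 L : ℝ)
    (hb0 : b0 = (-a1^2 + a1*a2*a3 - a0*a3^2)/4)
    (hb1 : b1 = (4*a0 - a2^2 - a1*a3)/4)
    (hb2 : b2 = a2/2)
    (hnn : 3*b1 + 4*b2^2 ≥ 0)
    (hL : L = (4*b2 + 2*Real.sqrt (3*b1 + 4*b2^2))/3)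
    (h1 : L ≥ a3^2/4)
    (h2 : -(1/4)*L^3 + b2*L^2 + b1*L + b0 ≥ 0) :
    ∀ x y : ℝ, 0 ≤ x^4 + a3*x^3*y + a2*x^2*y^2 + a1*x*y^3 + a0*y^4 := by
  subst hb0 hb1 hb2
  have hcrit : QuarticForm.resolventDeriv a0 a1 a2 a3 L = 0 := by
    rw [QuarticForm.resolventDeriv, hL]
    linear_combination (-(1/3 : ℝ)) * Real.sq_sqrt hnn
  exact QuarticForm.nonneg_of_resolvent_nonneg_of_resolventDeriv_eq_zero h1 h2 hcrit
end

section
/- (Theorem 2, definite direction) Let b0 = (-a1^2 + a1*a2*a3 - a0*a3^2)/4, b1 = (4*a0 - a2^2 - a1*a3)/4, b2 = a2/2, and suppose 3*b1 + 4*b2^2 ≥ 0 with λ0 = (4*b2 + 2*sqrt(3*b1 + 4*b2^2))/3. If λ0 > a3^2/4 and -(1/4)λ0^3 + b2*λ0^2 + b1*λ0 + b0 > 0, then f(x,y) = x^4 + a3*x^3*y + a2*x^2*y^2 + a1*x*y^3 + a0*y^4 > 0 for all real (x,y) ≠ (0,0). -/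
/-!
Completing the square in `x²` with a free parameter `L` writes the quartic as
`(x² + (a3/2) x y + t y²)² + Q(x y, y²)` with `t = (a2 - L)/2`, where `Q` is a binary quadratic
form with leading coefficient `L - a3²/4`. The discriminant `4AC - B²` of `Q` is four times the
resolvent cubic `-(1/4)L³ + b2 L² + b1 L + b0`, so `L > a3²/4` and positivity of the cubic make
`Q` positive definite, and the quartic is positive as soon as `y ≠ 0`; for `y = 0` it is `x⁴`.
-/

lemma quadForm_pos {A B C : ℝ} (hA : 0 < A) (hdisc : 0 < 4 * A * C - B ^ 2) (u : ℝ) {v : ℝ}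
    (hv : v ≠ 0) : 0 < A * u ^ 2 + B * u * v + C * v ^ 2 := by
  have hsq : 4 * A * (A * u ^ 2 + B * u * v + C * v ^ 2)
      = (2 * A * u + B * v) ^ 2 + (4 * A * C - B ^ 2) * v ^ 2 := by ring
  have : 0 < 4 * A * (A * u ^ 2 + B * u * v + C * v ^ 2) := by
    rw [hsq]; positivity
  exact pos_of_mul_pos_right this (by positivity)

lemma quartic_eq_sq_add_quadForm (a0 a1 a2 a3 L x y : ℝ) :
    x^4 + a3*x^3*y + a2*x^2*y^2 + a1*x*y^3 + a0*y^4
      = (x^2 + a3/2*x*y + (a2 - L)/2*y^2)^2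
        + ((L - a3^2/4) * (x*y)^2 + (a1 - a3*((a2 - L)/2)) * (x*y) * y^2
          + (a0 - ((a2 - L)/2)^2) * (y^2)^2) := by
  ring

lemma quadForm_discrim_eq_resolvent (a0 a1 a2 a3 L : ℝ) :
    4 * (L - a3^2/4) * (a0 - ((a2 - L)/2)^2) - (a1 - a3*((a2 - L)/2))^2
      = 4 * (-(1/4)*L^3 + a2/2*L^2 + (4*a0 - a2^2 - a1*a3)/4*L
          + (-a1^2 + a1*a2*a3 - a0*a3^2)/4) := by
  ring

theorem stmt8_general (a0 a1 a2 a3 b0 b1 b2 L : ℝ)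
    (hb0 : b0 = (-a1^2 + a1*a2*a3 - a0*a3^2)/4)
    (hb1 : b1 = (4*a0 - a2^2 - a1*a3)/4)
    (hb2 : b2 = a2/2)
    (h1 : L > a3^2/4)
    (h2 : -(1/4)*L^3 + b2*L^2 + b1*L + b0 > 0) :
    ∀ x y : ℝ, (x, y) ≠ (0, 0) →
      0 < x^4 + a3*x^3*y + a2*x^2*y^2 + a1*x*y^3 + a0*y^4 := by
  intro x y hxy
  subst hb0 hb1 hb2
  rcases eq_or_ne y 0 with rfl | hy
  · have hx : x ≠ 0 := by simpa using hxy
    simpa using Even.pow_pos (by decide : Even 4) hx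
  · have hdisc := quadForm_discrim_eq_resolvent a0 a1 a2 a3 L
    rw [quartic_eq_sq_add_quadForm a0 a1 a2 a3 L]
    have hQ := quadForm_pos (B := a1 - a3*((a2 - L)/2)) (C := a0 - ((a2 - L)/2)^2)
      (sub_pos.mpr h1) (by linarith) (x * y) (pow_ne_zero 2 hy)
    positivity

theorem stmt8 (a0 a1 a2 a3 b0 b1 b2 L : ℝ)
    (hb0 : b0 = (-a1^2 + a1*a2*a3 - a0*a3^2)/4)
    (hb1 : b1 = (4*a0 - a2^2 - a1*a3)/4)
    (hb2 : b2 = a2/2)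
    (hnn : 3*b1 + 4*b2^2 ≥ 0)
    (hL : L = (4*b2 + 2*Real.sqrt (3*b1 + 4*b2^2))/3)
    (h1 : L > a3^2/4)
    (h2 : -(1/4)*L^3 + b2*L^2 + b1*L + b0 > 0) :
    ∀ x y : ℝ, (x, y) ≠ (0, 0) →
      0 < x^4 + a3*x^3*y + a2*x^2*y^2 + a1*x*y^3 + a0*y^4 :=
  stmt8_general a0 a1 a2 a3 b0 b1 b2 L hb0 hb1 hb2 h1 h2
end

section
/- (Theorem 2, converse for positive definiteness) If the form f(x,y) = x^4 + a3*x^3*y + a2*x^2*y^2 + a1*x*y^3 + a0*y^4 satisfies f(x,y) > 0 for all real (x,y) ≠ (0,0), then with b0 = (-a1^2 + a1*a2*a3 - a0*a3^2)/4, b1 = (4*a0 - a2^2 - a1*a3)/4, b2 = a2/2 one has 3*b1 + 4*b2^2 ≥ 0, and λ0 = (4*b2 + 2*sqrt(3*b1 + 4*b2^2))/3 satisfies λ0 > a3^2/4 and -(1/4)λ0^3 + b2*λ0^2 + b1*λ0 + b0 > 0. -/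
/-!
A positive definite quartic has no real roots, so pairing each complex root with its conjugate
factors `x^4 + a3 x^3 + a2 x^2 + a1 x + a0` as `((x-p)^2+q^2)((x-r)^2+s^2)` with `q, s > 0`.
In these parameters the cubic `g(λ) = -λ^3/4 + b2 λ^2 + b1 λ + b0` is
`-(λ-α)(λ-β)(λ-γ)/4` with `α = 4pr`, `β = (p+r)^2+(q-s)^2`, `γ = (p+r)^2+(q+s)^2`, so
`α ≤ β < γ`. Now `λ0` is the larger critical point of `g`; it lies strictly between the two
largest roots `β` and `γ`, where `g > 0`, and `λ0 > β ≥ (p+r)^2 = a3^2/4`.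
-/

open Polynomial

lemma exists_root_im_ne_zero_of_forall_pos {a0 a1 a2 a3 : ℝ}
    (hpos : ∀ x : ℝ, 0 < x^4 + a3*x^3 + a2*x^2 + a1*x + a0) :
    ∃ z : ℂ, z.im ≠ 0 ∧ z^4 + a3*z^3 + a2*z^2 + a1*z + a0 = 0 := by
  obtain ⟨z, hz⟩ := Complex.exists_root
    (f := X^4 + C (a3:ℂ) * X^3 + C (a2:ℂ) * X^2 + C (a1:ℂ) * X + C (a0:ℂ))
    (by rw [show degree _ = 4 by compute_degree!]; norm_num)
  simp only [IsRoot, eval_add, eval_mul, eval_pow, eval_C, eval_X] at hz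
  refine ⟨z, fun him => (hpos z.re).ne' ?_, hz⟩
  rw [← Complex.re_add_im z, him] at hz
  simp only [Complex.ofReal_zero, zero_mul, add_zero] at hz
  exact_mod_cast hz

lemma Complex.sq_sub_two_re_mul_add_normSq (z : ℂ) : z^2 - 2*z.re*z + Complex.normSq z = 0 := by
  rw [Complex.normSq_eq_conj_mul_self, Complex.re_eq_add_conj]
  ring

lemma Complex.eq_zero_of_ofReal_mul_add_ofReal_eq_zero {e f : ℝ} {z : ℂ} (hz : z.im ≠ 0)
    (h : (e : ℂ) * z + f = 0) : e = 0 ∧ f = 0 := by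
  have he : e = 0 := by simpa [hz] using congrArg Complex.im h
  exact ⟨he, by simpa [he] using congrArg Complex.re h⟩

lemma exists_quadratic_factors_of_quartic_pos {a0 a1 a2 a3 : ℝ}
    (hpos : ∀ x : ℝ, 0 < x^4 + a3*x^3 + a2*x^2 + a1*x + a0) :
    ∃ p q r s : ℝ, 0 < q ∧ 0 < s ∧
      a3 = -2*(p+r) ∧ a2 = p^2+q^2+r^2+s^2+4*p*r ∧
      a1 = -2*p*(r^2+s^2)-2*r*(p^2+q^2) ∧ a0 = (p^2+q^2)*(r^2+s^2) := by
  obtain ⟨z, hz, hroot⟩ := exists_root_im_ne_zero_of_forall_pos hpos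
  set n := Complex.normSq z
  have hn : n = z.re^2 + z.im^2 := by simp only [n, Complex.normSq_apply]; ring
  obtain ⟨r, rfl⟩ : ∃ r, a3 = -2*(z.re + r) := ⟨-a3/2 - z.re, by ring⟩
  obtain ⟨t, rfl⟩ : ∃ t, a2 = n + t + 4*z.re*r := ⟨a2 - n - 4*z.re*r, by ring⟩
  obtain ⟨he, hf⟩ : a1 + 2*z.re*t + 2*r*n = 0 ∧ a0 - n*t = 0 := by
    -- the remainder of the division by `(X - z)(X - conj z)`, evaluated at `z`
    refine Complex.eq_zero_of_ofReal_mul_add_ofReal_eq_zero hz ?_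
    push_cast at hroot ⊢
    linear_combination hroot - (z^2 - 2*r*z + t) * z.sq_sub_two_re_mul_add_normSq
  obtain rfl : a1 = -2*z.re*t - 2*r*n := by linarith
  obtain rfl : a0 = n*t := by linarith
  have hquot : 0 < t - r^2 := by
    refine pos_of_mul_pos_right (a := (r - z.re)^2 + z.im^2) ?_ (by positivity)
    exact (hpos r).trans_eq (by rw [hn]; ring)
  have hs := Real.sq_sqrt hquot.le
  refine ⟨z.re, |z.im|, r, √(t - r^2), abs_pos.2 hz, Real.sqrt_pos.2 hquot, by ring, ?_, ?_, ?_⟩ <;>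
    rw [sq_abs, hs]
  · linear_combination hn
  · linear_combination -2*r*hn
  · linear_combination t*hn

lemma pos_and_neg_of_sum_nonneg_of_pairwise_sum_eq_zero {u v w : ℝ} (hvu : v ≤ u) (hwv : w < v)
    (hsum : 0 ≤ u + v + w) (hpair : u*v + u*w + v*w = 0) : 0 < v ∧ w < 0 := by
  constructor <;> nlinarith

lemma cubic_pos_at_larger_critical_point {c0 c1 c2 α β γ m : ℝ} (hαβ : α ≤ β) (hβγ : β < γ)
    (hc2 : 4*c2 = α+β+γ) (hc1 : 4*c1 = -(α*β+β*γ+γ*α)) (hc0 : 4*c0 = α*β*γ)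
    (hm : m = (4*c2 + 2*√(3*c1 + 4*c2^2))/3) :
    0 ≤ 3*c1 + 4*c2^2 ∧ β < m ∧ 0 < -(1/4)*m^3 + c2*m^2 + c1*m + c0 := by
  have hD : 3*c1 + 4*c2^2 = ((α-β)^2 + (β-γ)^2 + (γ-α)^2)/8 := by
    linear_combination (3/4)*hc1 + (c2 + (α+β+γ)/4)*hc2
  have hD0 : 0 ≤ 3*c1 + 4*c2^2 := by rw [hD]; positivity
  set S := √(3*c1 + 4*c2^2)
  have hS : S^2 = 3*c1 + 4*c2^2 := Real.sq_sqrt hD0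
  have hsum : 0 ≤ (m-α) + (m-β) + (m-γ) := by linarith [Real.sqrt_nonneg (3*c1 + 4*c2^2)]
  have hpair : (m-α)*(m-β) + (m-α)*(m-γ) + (m-β)*(m-γ) = 0 := by
    subst hm
    linear_combination (4/3)*hS + 2*((4*c2 + 2*S)/3)*hc2 + hc1
  have hval : -(1/4)*m^3 + c2*m^2 + c1*m + c0 = -(1/4)*((m-α)*(m-β)*(m-γ)) := by
    linear_combination (m^2/4)*hc2 + (m/4)*hc1 + (1/4)*hc0
  obtain ⟨hv, hw⟩ := pos_and_neg_of_sum_nonneg_of_pairwise_sum_eq_zero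
    (by linarith : m - β ≤ m - α) (by linarith : m - γ < m - β) hsum hpair
  have hprod : (m-α)*(m-β)*(m-γ) < 0 := mul_neg_of_pos_of_neg (by nlinarith) hw
  exact ⟨hD0, by linarith, by rw [hval]; linarith⟩

theorem stmt9 (a0 a1 a2 a3 b0 b1 b2 : ℝ)
    (hb0 : b0 = (-a1^2 + a1*a2*a3 - a0*a3^2)/4)
    (hb1 : b1 = (4*a0 - a2^2 - a1*a3)/4)
    (hb2 : b2 = a2/2)
    (hpos : ∀ x y : ℝ, (x, y) ≠ (0, 0) →
      0 < x^4 + a3*x^3*y + a2*x^2*y^2 + a1*x*y^3 + a0*y^4) :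
    3*b1 + 4*b2^2 ≥ 0 ∧
    (4*b2 + 2*Real.sqrt (3*b1 + 4*b2^2))/3 > a3^2/4 ∧
    -(1/4)*((4*b2 + 2*Real.sqrt (3*b1 + 4*b2^2))/3)^3
      + b2*((4*b2 + 2*Real.sqrt (3*b1 + 4*b2^2))/3)^2
      + b1*((4*b2 + 2*Real.sqrt (3*b1 + 4*b2^2))/3) + b0 > 0 := by
  obtain ⟨p, q, r, s, hq, hs, rfl, rfl, rfl, rfl⟩ :=
    exists_quadratic_factors_of_quartic_pos fun x => by simpa using hpos x 1 (by simp)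
  obtain ⟨hD, hlt, hval⟩ := cubic_pos_at_larger_critical_point (c0 := b0) (c1 := b1) (c2 := b2)
    (α := 4*p*r) (β := (p+r)^2 + (q-s)^2) (γ := (p+r)^2 + (q+s)^2)
    (by nlinarith [sq_nonneg (p-r), sq_nonneg (q-s)]) (by nlinarith [mul_pos hq hs])
    (by rw [hb2]; ring) (by rw [hb1]; ring) (by rw [hb0]; ring) rfl
  exact ⟨hD, by nlinarith [sq_nonneg (q-s)], hval⟩
end

section
/- (Theorem 2, converse for positive semi-definiteness) If f(x,y) = x^4 + a3*x^3*y + a2*x^2*y^2 + a1*x*y^3 + a0*y^4 satisfies f(x,y) ≥ 0 for all real x, y, then with b0 = (-a1^2 + a1*a2*a3 - a0*a3^2)/4, b1 = (4*a0 - a2^2 - a1*a3)/4, b2 = a2/2 one has 3*b1 + 4*b2^2 ≥ 0, and λ0 = (4*b2 + 2*sqrt(3*b1 + 4*b2^2))/3 satisfies λ0 ≥ a3^2/4 and -(1/4)λ0^3 + b2*λ0^2 + b1*λ0 + b0 ≥ 0. -/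
/-!
For `ε > 0` the quartic `x^4 + a3 x^3 + a2 x^2 + a1 x + a0 + ε` is strictly positive on `ℝ`, so its
roots are two pairs of conjugate non-real numbers `r ± i√p`, `s ± i√q`, and it factors as
`((x - r)^2 + p) * ((x - s)^2 + q)` with `p, q > 0`. In these coordinates all three claims become
polynomial inequalities: `3 b1 + 4 b2^2` is a sum of nonnegative terms, and the value of the
resolvent cubic at its local maximum `λ0` is nonnegative because its discriminant is
`27 p q F^2 ≥ 0` for an explicit `F`. Perturbing `a0` by `ε` only shifts `b1` by `ε` and `b0` by
`-ε a3^2/4`, and the claims are closed conditions, so they survive the limit `ε → 0`.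
-/

open Polynomial

noncomputable section

def resolventCubic (b0 b1 b2 l : ℝ) : ℝ := -(1/4)*l^3 + b2*l^2 + b1*l + b0

/-- The larger critical point of `resolventCubic`, where it has its local maximum. -/
def resolventCriticalPoint (b1 b2 : ℝ) : ℝ := (4*b2 + 2*√(3*b1 + 4*b2^2))/3

def ResolventCondition (a3 b0 b1 b2 : ℝ) : Prop :=
  0 ≤ 3*b1 + 4*b2^2 ∧ a3^2/4 ≤ resolventCriticalPoint b1 b2 ∧
    0 ≤ resolventCubic b0 b1 b2 (resolventCriticalPoint b1 b2)

end

section Cubic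

variable {b0 b1 b2 : ℝ}

theorem resolventCubic_criticalPoint (hS : 0 ≤ 3*b1 + 4*b2^2) :
    resolventCubic b0 b1 b2 (resolventCriticalPoint b1 b2) =
      resolventCubic b0 b1 b2 (4*b2/3) + 4/27*(3*b1 + 4*b2^2)*√(3*b1 + 4*b2^2) := by
  unfold resolventCubic resolventCriticalPoint
  linear_combination (-(2/27)*√(3*b1 + 4*b2^2)) * Real.sq_sqrt hS

theorem resolventCubic_criticalPoint_nonneg (hS : 0 ≤ 3*b1 + 4*b2^2)
    (hdisc : (27 * resolventCubic b0 b1 b2 (4*b2/3))^2 ≤ 16*(3*b1 + 4*b2^2)^3) :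
    0 ≤ resolventCubic b0 b1 b2 (resolventCriticalPoint b1 b2) := by
  rw [resolventCubic_criticalPoint hS]
  set c := resolventCubic b0 b1 b2 (4*b2/3)
  set S := 3*b1 + 4*b2^2
  have hc : |c| ≤ 4/27*S*√S := by
    refine abs_le_of_sq_le_sq ?_ (by positivity)
    calc c^2 ≤ 16/729*S^3 := by linarith
      _ = (4/27*S*√S)^2 := by rw [mul_pow, Real.sq_sqrt hS]; ring
  linarith [neg_abs_le c]

end Cubic

section Quartic

variable {a0 a1 a2 a3 : ℝ}

theorem exists_nonreal_root_of_pos (h : ∀ x : ℝ, 0 < x^4 + a3*x^3 + a2*x^2 + a1*x + a0) :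
    ∃ z : ℂ, z.im ≠ 0 ∧ z^4 + a3*z^3 + a2*z^2 + a1*z + a0 = 0 := by
  set f : ℂ[X] := X^4 + C (a3:ℂ) * X^3 + C (a2:ℂ) * X^2 + C (a1:ℂ) * X + C (a0:ℂ)
  have hdeg : f.degree = 4 := by unfold f; compute_degree!
  obtain ⟨z, hz⟩ := Complex.exists_root (f := f) (by rw [hdeg]; norm_num)
  have hroot : z^4 + a3*z^3 + a2*z^2 + a1*z + a0 = 0 := by
    simpa [f, IsRoot] using hz
  refine ⟨z, fun hre => (h z.re).ne' ?_, hroot⟩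
  rw [← Complex.re_add_im z, hre] at hroot
  simp only [Complex.ofReal_zero, zero_mul, add_zero] at hroot
  exact_mod_cast hroot

theorem coeffs_of_nonreal_root {z : ℂ} (him : z.im ≠ 0)
    (hroot : z^4 + a3*z^3 + a2*z^2 + a1*z + a0 = 0) :
    ∃ s q : ℝ, a3 = -2*(z.re + s) ∧ a2 = z.re^2 + s^2 + 4*z.re*s + z.im^2 + q ∧
      a1 = -2*z.re*(s^2 + q) - 2*s*(z.re^2 + z.im^2) ∧ a0 = (z.re^2 + z.im^2)*(s^2 + q) := by
  set r := z.re
  set p := z.im^2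
  obtain ⟨s, rfl⟩ : ∃ s, a3 = -2*(r + s) := ⟨-a3/2 - r, by ring⟩
  obtain ⟨q, rfl⟩ : ∃ q, a2 = r^2 + s^2 + 4*r*s + p + q := ⟨a2 - (r^2 + s^2 + 4*r*s + p), by ring⟩
  set R1 := a1 - (-2*r*(s^2 + q) - 2*s*(r^2 + p))
  set R0 := a0 - (r^2 + p)*(s^2 + q)
  have hquad : (z - r)^2 + (p : ℂ) = 0 := by
    apply Complex.ext <;> simp [r, p, sq]
  -- the remainder of the quartic modulo the real quadratic `(X - r)^2 + p`
  have hrem : (R1 : ℂ) * z + R0 = 0 := by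
    push_cast [R1, R0] at hroot ⊢
    linear_combination hroot - ((z - s)^2 + q) * hquad
  have hR1 : R1 = 0 := by
    simpa [him] using congrArg Complex.im hrem
  have hR0 : R0 = 0 := by
    simpa [hR1] using congrArg Complex.re hrem
  exact ⟨s, q, rfl, rfl, by linarith, by linarith⟩

theorem exists_factorization_of_pos (h : ∀ x : ℝ, 0 < x^4 + a3*x^3 + a2*x^2 + a1*x + a0) :
    ∃ r s p q : ℝ, 0 ≤ p ∧ 0 ≤ q ∧ a3 = -2*(r + s) ∧ a2 = r^2 + s^2 + 4*r*s + p + q ∧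
      a1 = -2*r*(s^2 + q) - 2*s*(r^2 + p) ∧ a0 = (r^2 + p)*(s^2 + q) := by
  obtain ⟨z, him, hroot⟩ := exists_nonreal_root_of_pos h
  obtain ⟨s, q, h3, h2, h1, h0⟩ := coeffs_of_nonreal_root him hroot
  refine ⟨z.re, s, z.im^2, q, sq_nonneg _, ?_, h3, h2, h1, h0⟩
  have hfs : 0 < ((s - z.re)^2 + z.im^2) * q := by
    convert h s using 1
    rw [h3, h2, h1, h0]; ring
  have hpos : 0 < (s - z.re)^2 + z.im^2 := by positivity
  exact (pos_of_mul_pos_right hfs hpos.le).le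

variable {r s p q b0 b1 b2 : ℝ}

theorem resolventCondition_of_factorization (hp : 0 ≤ p) (hq : 0 ≤ q)
    (hb0 : b0 = (-a1^2 + a1*a2*a3 - a0*a3^2)/4)
    (hb1 : b1 = (4*a0 - a2^2 - a1*a3)/4)
    (hb2 : b2 = a2/2)
    (h3 : a3 = -2*(r + s)) (h2 : a2 = r^2 + s^2 + 4*r*s + p + q)
    (h1 : a1 = -2*r*(s^2 + q) - 2*s*(r^2 + p)) (h0 : a0 = (r^2 + p)*(s^2 + q)) :
    ResolventCondition a3 b0 b1 b2 := by
  have hS : 3*b1 + 4*b2^2 = 3*(p + (r-s)^2/4)*(q + (r-s)^2/4) + (p + q - (r-s)^2/2)^2/4 := by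
    subst hb1 hb2 h3 h2 h1 h0; ring
  -- the left side is `27/16` times the discriminant of the resolvent cubic, the right side
  -- `27/16` times the discriminant of the quartic, which has roots `r ± i√p`, `s ± i√q`
  have hdisc : 16*(3*b1 + 4*b2^2)^3 - (27 * resolventCubic b0 b1 b2 (4*b2/3))^2
      = 27*p*q*((r-s)^4 + 2*(r-s)^2*(p+q) + (p-q)^2)^2 := by
    subst hb0 hb1 hb2 h3 h2 h1 h0; unfold resolventCubic; ring
  have hcrit : resolventCriticalPoint b1 b2 - a3^2/4
      = 2/3*(√(3*b1 + 4*b2^2) - ((r-s)^2/2 - p - q)) := by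
    subst hb1 hb2 h3 h2; unfold resolventCriticalPoint; ring
  have hS0 : 0 ≤ 3*b1 + 4*b2^2 := by rw [hS]; positivity
  have hsqrt : (r-s)^2/2 - p - q ≤ √(3*b1 + 4*b2^2) := by
    rcases le_or_gt ((r-s)^2/2 - p - q) 0 with hneg | hpos
    · exact hneg.trans (Real.sqrt_nonneg _)
    · refine Real.le_sqrt_of_sq_le ?_
      rw [hS]
      nlinarith [mul_nonneg hp hq, mul_nonneg (add_nonneg hp hq) hpos.le]
  refine ⟨hS0, by linarith, resolventCubic_criticalPoint_nonneg hS0 ?_⟩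
  have : 0 ≤ 27*p*q*((r-s)^4 + 2*(r-s)^2*(p+q) + (p-q)^2)^2 := by positivity
  linarith

end Quartic

theorem le_of_forall_pos_of_continuous {f g : ℝ → ℝ} (hf : Continuous f) (hg : Continuous g)
    (h : ∀ ε > 0, f ε ≤ g ε) : f 0 ≤ g 0 := by
  have : closure (Set.Ioi (0:ℝ)) ⊆ {ε | f ε ≤ g ε} := (isClosed_le hf hg).closure_subset_iff.2 h
  exact this (by simp [closure_Ioi])

theorem ResolventCondition.of_perturbation {a3 b0 b1 b2 : ℝ}
    (h : ∀ ε > 0, ResolventCondition a3 (b0 - ε*a3^2/4) (b1 + ε) b2) :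
    ResolventCondition a3 b0 b1 b2 := by
  unfold ResolventCondition resolventCriticalPoint resolventCubic at h ⊢
  refine ⟨?_, ?_, ?_⟩
  · simpa using le_of_forall_pos_of_continuous (f := fun _ => 0)
      (g := fun ε => 3*(b1 + ε) + 4*b2^2) (by fun_prop) (by fun_prop) fun ε hε => (h ε hε).1
  · simpa using le_of_forall_pos_of_continuous (f := fun _ => a3^2/4)
      (g := fun ε => (4*b2 + 2*√(3*(b1 + ε) + 4*b2^2))/3) (by fun_prop) (by fun_prop)
      fun ε hε => (h ε hε).2.1
  · simpa using le_of_forall_pos_of_continuous (f := fun _ => 0)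
      (g := fun ε => -(1/4)*((4*b2 + 2*√(3*(b1 + ε) + 4*b2^2))/3)^3
        + b2*((4*b2 + 2*√(3*(b1 + ε) + 4*b2^2))/3)^2
        + (b1 + ε)*((4*b2 + 2*√(3*(b1 + ε) + 4*b2^2))/3) + (b0 - ε*a3^2/4))
      (by fun_prop) (by fun_prop) fun ε hε => (h ε hε).2.2

theorem stmt10 (a0 a1 a2 a3 b0 b1 b2 : ℝ)
    (hb0 : b0 = (-a1^2 + a1*a2*a3 - a0*a3^2)/4)
    (hb1 : b1 = (4*a0 - a2^2 - a1*a3)/4)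
    (hb2 : b2 = a2/2)
    (hpos : ∀ x y : ℝ, 0 ≤ x^4 + a3*x^3*y + a2*x^2*y^2 + a1*x*y^3 + a0*y^4) :
    3*b1 + 4*b2^2 ≥ 0 ∧
    (4*b2 + 2*Real.sqrt (3*b1 + 4*b2^2))/3 ≥ a3^2/4 ∧
    -(1/4)*((4*b2 + 2*Real.sqrt (3*b1 + 4*b2^2))/3)^3
      + b2*((4*b2 + 2*Real.sqrt (3*b1 + 4*b2^2))/3)^2
      + b1*((4*b2 + 2*Real.sqrt (3*b1 + 4*b2^2))/3) + b0 ≥ 0 := by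
  suffices ResolventCondition a3 b0 b1 b2 from this
  refine .of_perturbation fun ε hε => ?_
  have hpos' : ∀ x : ℝ, 0 < x^4 + a3*x^3 + a2*x^2 + a1*x + (a0 + ε) := fun x => by
    linarith [hpos x 1]
  obtain ⟨r, s, p, q, hp, hq, h3, h2, h1, h0⟩ := exists_factorization_of_pos hpos'
  exact resolventCondition_of_factorization hp hq (by rw [hb0]; ring) (by rw [hb1]; ring) hb2
    h3 h2 h1 h0
end

section
/- The quartic form f(x,y) = x^4 + a3*x^3*y + a2*x^2*y^2 + a1*x*y^3 + a0*y^4 is positive definite (f(x,y) > 0 for all (x,y) ≠ (0,0)) if and only if the matrix M(λ0) = [[1, a3/2, (a2-λ0)/2], [a3/2, λ0, a1/2], [(a2-λ0)/2, a1/2, a0]] is positive definite, where λ0 = (4*b2 + 2*sqrt(3*b1 + 4*b2^2))/3 with b1 = (4*a0 - a2^2 - a1*a3)/4, b2 = a2/2, under the hypothesis 3*b1 + 4*b2^2 ≥ 0. -/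
/-!
For every `λ`, `f(x, y) = vᵀ M(λ) v` with `v = (x², xy, y²)`, so `M(λ₀) ≻ 0` gives `f > 0`.
Conversely, if `f > 0`, Ferrari's method factors the depressed quartic `f(u - a3/4, 1)` as
`(u² + mu + w₁)(u² - mu + w₂)` with both factors positive, i.e. `4wᵢ = Uᵢ² + m²` with `Uᵢ > 0`.
In these coordinates `det M(a3²/4 + μ) = -(μ + m²)(μ - (U₁ - U₂)²/4)(μ - (U₁ + U₂)²/4)/4`,
and `λ₀` is exactly the larger critical point of `λ ↦ det M(λ)`. It therefore lies strictly
between the two nonnegative roots, where both `det M(λ₀)` and the minor `λ₀ - a3²/4` are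
positive, and Sylvester's criterion applies.
-/

open Matrix

lemma exists_pos_root_of_cubic {a b c : ℝ} (hc : c < 0) :
    ∃ θ > 0, θ^3 + a*θ^2 + b*θ + c = 0 := by
  set R := 1 + |a| + |b| + |c|
  have hR : 1 ≤ R := by simp only [R]; linarith [abs_nonneg a, abs_nonneg b, abs_nonneg c]
  have hCR : 0 < R^3 + a*R^2 + b*R + c := by
    have ha : -(|a| * R^2) ≤ a*R^2 := by nlinarith [neg_abs_le a]
    have hb : -(|b| * R^2) ≤ b*R := by
      nlinarith [neg_abs_le b,
        mul_nonneg (mul_nonneg (abs_nonneg b) (sub_nonneg.2 hR)) (zero_le_one.trans hR)]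
    have hc' : -(|c| * R^2) ≤ c := by
      nlinarith [neg_abs_le c, mul_nonneg (abs_nonneg c) (sub_nonneg.2 (one_le_pow₀ (n := 2) hR))]
    have hR2 : R^3 - |a| * R^2 - |b| * R^2 - |c| * R^2 = R^2 := by simp only [R]; ring
    nlinarith
  obtain ⟨θ, hθ, hroot⟩ := intermediate_value_Ioo (zero_le_one.trans hR)
    (f := fun θ => θ^3 + a*θ^2 + b*θ + c) (by fun_prop) ⟨by simpa using hc, hCR⟩
  exact ⟨θ, hθ.1, hroot⟩

/-- The three equations say `u⁴ + pu² + qu + r = (u² + mu + w1)(u² - mu + w2)`; for `q ≠ 0`,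
`θ = m²` is a positive root of the resolvent cubic `θ(θ + p)² - 4rθ - q²`. -/
lemma exists_depressed_quartic_factorization (p q r : ℝ) :
    ∃ m w1 w2 : ℝ, w1 + w2 = p + m^2 ∧ m*(w2 - w1) = q ∧ w1*w2 = r := by
  rcases eq_or_ne q 0 with rfl | hq
  · rcases le_or_gt (4*r) (p^2) with hdisc | hdisc
    · have hR := Real.sq_sqrt (sub_nonneg.2 hdisc)
      exact ⟨0, (p - √(p^2 - 4*r))/2, (p + √(p^2 - 4*r))/2, by ring, by ring,
        by linear_combination -hR/4⟩
    · have hr : 0 ≤ r := by nlinarith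
      have hp : p < 2*√r := by nlinarith [Real.sq_sqrt hr, Real.sqrt_nonneg r]
      refine ⟨√(2*√r - p), √r, √r, ?_, by ring, Real.mul_self_sqrt hr⟩
      rw [Real.sq_sqrt (by linarith)]; ring
  · obtain ⟨θ, hθ, hroot⟩ := exists_pos_root_of_cubic (a := 2*p) (b := p^2 - 4*r)
      (neg_neg_of_pos (by positivity : 0 < q^2))
    have hm : √θ ^ 2 = θ := Real.sq_sqrt hθ.le
    have hm0 : √θ ≠ 0 := (Real.sqrt_pos.2 hθ).ne'
    refine ⟨√θ, (p + θ)/2 - q/(2*√θ), (p + θ)/2 + q/(2*√θ), by linear_combination -hm, ?_, ?_⟩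
    · field_simp; ring
    · field_simp
      linear_combination ((p + θ)^2 - 4*r)*hm + hroot

lemma sq_lt_four_mul_of_forall_mul_pos {b c : ℝ} {g : ℝ → ℝ}
    (h : ∀ u, 0 < (u^2 + b*u + c) * g u) : b^2 < 4*c := by
  by_contra! hle
  obtain ⟨u, hu⟩ := exists_quadratic_eq_zero one_ne_zero
    ⟨√(discrim 1 b c), (Real.mul_self_sqrt (by rw [discrim]; linarith)).symm⟩
  have hroot : u^2 + b*u + c = 0 := by linear_combination hu
  simpa [hroot] using h u

lemma exists_pos_sq_add_of_sq_lt {m w : ℝ} (h : m^2 < 4*w) : ∃ U > 0, w = (U^2 + m^2)/4 :=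
  ⟨√(4*w - m^2), Real.sqrt_pos.2 (by linarith), by rw [Real.sq_sqrt (by linarith)]; ring⟩

/-- `μ` is the larger critical point of `(x - e1)(x - e2)(x - e3)`. -/
lemma larger_critical_point_mem_Ioo {e1 e2 e3 μ : ℝ} (h12 : e1 ≤ e2) (h23 : e2 < e3)
    (hcrit : 3*μ^2 - 2*(e1 + e2 + e3)*μ + (e1*e2 + e1*e3 + e2*e3) = 0)
    (hlarge : e1 + e2 + e3 ≤ 3*μ) :
    μ ∈ Set.Ioo e2 e3 := by
  constructor
  · nlinarith [mul_nonneg (sub_nonneg.2 h12) (sub_pos.2 h23).le]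
  · nlinarith [mul_pos (sub_pos.2 (h12.trans_lt h23)) (sub_pos.2 h23)]

lemma posDef_of_leadingMinors_pos {b c d e g : ℝ} (h2 : 0 < d - b^2)
    (h3 : 0 < (!![1, b, c; b, d, e; c, e, g]).det) :
    (!![1, b, c; b, d, e; c, e, g]).PosDef := by
  set M := !![1, b, c; b, d, e; c, e, g]
  rw [posDef_iff_dotProduct_mulVec]
  refine ⟨by ext i j; fin_cases i <;> fin_cases j <;> rfl, fun x hx => ?_⟩
  have hsq : (d - b^2) * (star x ⬝ᵥ (M *ᵥ x))
      = (d - b^2)*(x 0 + b*x 1 + c*x 2)^2 + ((d - b^2)*x 1 + (e - b*c)*x 2)^2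
        + M.det * x 2^2 := by
    simp only [M, det_fin_three, dotProduct, mulVec, Fin.sum_univ_three, Pi.star_apply, star_trivial,
      of_apply, cons_val', cons_val_fin_one, cons_val_zero, cons_val_one, cons_val, one_mul]
    ring
  have t1 : 0 ≤ (d - b^2)*(x 0 + b*x 1 + c*x 2)^2 := by positivity
  have t2 : 0 ≤ ((d - b^2)*x 1 + (e - b*c)*x 2)^2 := sq_nonneg _
  have t3 : 0 ≤ M.det * x 2^2 := by positivity
  refine pos_of_mul_pos_right (hsq ▸ ?_) h2.le
  rcases ne_or_eq (x 2) 0 with hx2 | hx2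
  · have : 0 < M.det * x 2^2 := by positivity
    linarith
  rcases ne_or_eq (x 1) 0 with hx1 | hx1
  · have : 0 < ((d - b^2)*x 1 + (e - b*c)*x 2)^2 := by
      rw [hx2, mul_zero, add_zero]; exact pow_two_pos_of_ne_zero (mul_ne_zero h2.ne' hx1)
    linarith
  have hx0 : x 0 ≠ 0 := fun hx0 => hx (by ext i; fin_cases i <;> assumption)
  have : 0 < (d - b^2)*(x 0 + b*x 1 + c*x 2)^2 := by
    rw [hx1, hx2, mul_zero, mul_zero, add_zero, add_zero]
    exact mul_pos h2 (pow_two_pos_of_ne_zero hx0)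
  linarith

/-- `h1`, `h2`, `h3` say that `f(u - a3/4, 1) = (u² + m u + w1)(u² - m u + w2)`. -/
lemma leadingMinors_pos_of_factorization {a0 a1 a2 a3 m w1 w2 s L : ℝ}
    (h1 : w1 + w2 = a2 - 3*a3^2/8 + m^2)
    (h2 : m*(w2 - w1) = a1 - a2*a3/2 + a3^3/8)
    (h3 : w1*w2 = a0 - a1*a3/4 + a2*a3^2/16 - 3*a3^4/256)
    (hw1 : m^2 < 4*w1) (hw2 : m^2 < 4*w2)
    (hs : 0 ≤ s) (hs2 : s^2 = 3*((4*a0 - a2^2 - a1*a3)/4) + 4*(a2/2)^2)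
    (hL : L = (4*(a2/2) + 2*s)/3) :
    0 < L - (a3/2)^2 ∧ 0 < (!![1, a3/2, (a2-L)/2; a3/2, L, a1/2; (a2-L)/2, a1/2, a0]).det := by
  obtain ⟨U, hU, rfl⟩ := exists_pos_sq_add_of_sq_lt hw1
  obtain ⟨V, hV, rfl⟩ := exists_pos_sq_add_of_sq_lt hw2
  have ha2 : a2 = (U^2 + V^2)/4 - m^2/2 + 3*a3^2/8 := by linear_combination -h1
  have ha1 : a1 = m*(V^2 - U^2)/4 + ((U^2 + V^2)/4 - m^2/2)*a3/2 + a3^3/16 := by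
    linear_combination -h2 - (a3/2)*h1
  have ha0 : a0 = (U^2 + m^2)/4*((V^2 + m^2)/4) + m*(V^2 - U^2)/4*a3/4
      + ((U^2 + V^2)/4 - m^2/2)*a3^2/16 + a3^4/256 := by
    linear_combination -h3 - (a3/4)*h2 - (a3^2/16)*h1
  set μ := L - (a3/2)^2 with hμ
  have hdet : (!![1, a3/2, (a2-L)/2; a3/2, L, a1/2; (a2-L)/2, a1/2, a0]).det
      = -(μ - -m^2) * (μ - (U-V)^2/4) * (μ - (U+V)^2/4) / 4 := by
    simp only [det_fin_three, of_apply, cons_val', cons_val_zero, cons_val_one, cons_val,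
      cons_val_fin_one, one_mul]
    rw [hμ, ha0, ha1, ha2]
    ring
  have hsplit : 3*μ - (-m^2 + (U-V)^2/4 + (U+V)^2/4) = 2*s := by
    rw [hμ, hL, ha2]; ring
  have hcrit : 3*μ^2 - 2*(-m^2 + (U-V)^2/4 + (U+V)^2/4)*μ
      + (-m^2*((U-V)^2/4) + -m^2*((U+V)^2/4) + (U-V)^2/4*((U+V)^2/4)) = 0 := by
    rw [ha0, ha1, ha2] at hs2
    linear_combination (3*μ - (-m^2 + (U-V)^2/4 + (U+V)^2/4) + 2*s)/3 * hsplit + (4/3)*hs2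
  have he2 : 0 ≤ (U-V)^2/4 := by positivity
  obtain ⟨h2μ, hμ3⟩ := larger_critical_point_mem_Ioo (by linarith [sq_nonneg m])
    (by nlinarith [mul_pos hU hV]) hcrit (by linarith)
  refine ⟨he2.trans_lt h2μ, ?_⟩
  have hneg := mul_neg_of_pos_of_neg
    (mul_pos (by linarith [sq_nonneg m] : 0 < μ - -m^2) (sub_pos.2 h2μ)) (sub_neg.2 hμ3)
  rw [hdet]
  linarith

lemma quarticForm_pos_of_posDef {a0 a1 a2 a3 L : ℝ}
    (hM : (!![1, a3/2, (a2-L)/2; a3/2, L, a1/2; (a2-L)/2, a1/2, a0]).PosDef)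
    {x y : ℝ} (hxy : (x, y) ≠ (0, 0)) :
    0 < x^4 + a3*x^3*y + a2*x^2*y^2 + a1*x*y^3 + a0*y^4 := by
  have hv : ![x^2, x*y, y^2] ≠ 0 := fun h =>
    hxy (Prod.ext (pow_eq_zero_iff two_ne_zero |>.1 (congrFun h 0))
      (pow_eq_zero_iff two_ne_zero |>.1 (congrFun h 2)))
  have hquad := hM.dotProduct_mulVec_pos hv
  simp only [mulVec, dotProduct, Fin.sum_univ_three, Pi.star_apply, star_trivial, of_apply,
    cons_val', cons_val_fin_one, cons_val_zero, cons_val_one, cons_val, one_mul] at hquad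
  linear_combination hquad

theorem stmt11 (a0 a1 a2 a3 b1 b2 L : ℝ)
    (hb1 : b1 = (4*a0 - a2^2 - a1*a3)/4)
    (hb2 : b2 = a2/2)
    (hnn : 3*b1 + 4*b2^2 ≥ 0)
    (hL : L = (4*b2 + 2*Real.sqrt (3*b1 + 4*b2^2))/3) :
    (∀ x y : ℝ, (x, y) ≠ (0, 0) →
      0 < x^4 + a3*x^3*y + a2*x^2*y^2 + a1*x*y^3 + a0*y^4) ↔
    ((!![1, a3/2, (a2-L)/2; a3/2, L, a1/2; (a2-L)/2, a1/2, a0] : Matrix (Fin 3) (Fin 3) ℝ)).PosDef := by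
  subst hb1 hb2
  refine ⟨fun hf => ?_, fun hM x y hxy => quarticForm_pos_of_posDef hM hxy⟩
  obtain ⟨m, w1, w2, h1, h2, h3⟩ := exists_depressed_quartic_factorization
    (a2 - 3*a3^2/8) (a1 - a2*a3/2 + a3^3/8) (a0 - a1*a3/4 + a2*a3^2/16 - 3*a3^4/256)
  have hfac : ∀ u, 0 < (u^2 + m*u + w1) * (u^2 - m*u + w2) := fun u => by
    convert hf (u - a3/4) 1 (by simp) using 1
    linear_combination u^2*h1 + u*h2 + h3
  have hw1 := sq_lt_four_mul_of_forall_mul_pos hfac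
  have hw2 : (-m)^2 < 4*w2 :=
    sq_lt_four_mul_of_forall_mul_pos (g := fun u => u^2 + m*u + w1) fun u => by
      rw [mul_comm]; convert hfac u using 3; ring
  obtain ⟨hminor2, hminor3⟩ := leadingMinors_pos_of_factorization h1 h2 h3 hw1
    (neg_sq m ▸ hw2) (Real.sqrt_nonneg _) (Real.sq_sqrt hnn) hL
  exact posDef_of_leadingMinors_pos hminor2 hminor3
end
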